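/- arXiv:1904.13344 — 3 statements merged into one kernel-verified Lean document; each statement's English description precedes it below -/
import Mathlib

section
/- Suppose real numbers satisfy: h = Σ_{i∈S} h_i (sum over a finite index set S of size s), and for each i ∈ S, h_i - 1 = α_i - b_i/2 - c_i with α_i > 0, b_i, c_i ≥ 0, and additionally h - 1 = Σ_{all k} α_k where the sum over all k includes the α_i for i ∈ S plus additional terms α_k > 0 for k ∉ S. If moreover Σ_{i∈S}(b_i + c_i) ≥ 2(s-1), then all c_i = 0, there are no indices outside S, and Σ b_i = 2(s-1). -/
open Finset

/-- The numerical argument from the stable reduction theorem: given positive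
rationals `α k` for `k ∈ T ⊇ S`, nonnegative `b i`, `c i` for `i ∈ S`, integers
`hvals i` with `hvals i - 1 = α i - b i / 2 - c i`, `h = Σ_{i∈S} hvals i`,
`Σ_{k∈T} α k = h - 1` and `Σ b + Σ c ≥ 2(|S| - 1)`, every `c i` vanishes,
`T = S`, and `Σ b = 2(|S| - 1)`. -/
theorem stable_reduction_numerics {ι : Type*} [DecidableEq ι]
    (S T : Finset ι) (hST : S ⊆ T)
    (α b c : ι → ℚ) (hvals : ι → ℤ) (h : ℚ)
    (hα : ∀ k ∈ T, 0 < α k)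
    (hb : ∀ i ∈ S, 0 ≤ b i) (hc : ∀ i ∈ S, 0 ≤ c i)
    (hhi : ∀ i ∈ S, (hvals i : ℚ) - 1 = α i - b i / 2 - c i)
    (hsum : h = ∑ i ∈ S, (hvals i : ℚ))
    (hαsum : ∑ k ∈ T, α k = h - 1)
    (hbc : 2 * ((S.card : ℚ) - 1) ≤ ∑ i ∈ S, b i + ∑ i ∈ S, c i) :
    (∀ i ∈ S, c i = 0) ∧ T = S ∧
      ∑ i ∈ S, b i = 2 * ((S.card : ℚ) - 1) := by
  have key : ∑ i ∈ S, ((hvals i : ℚ) - 1) = ∑ i ∈ S, (α i - b i / 2 - c i) :=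
    Finset.sum_congr rfl hhi
  rw [Finset.sum_sub_distrib] at key
  simp only [Finset.sum_sub_distrib, Finset.sum_const, nsmul_eq_mul, mul_one,
    Finset.sum_div] at key
  have hsplit : ∑ k ∈ T \ S, α k + ∑ i ∈ S, α i = ∑ k ∈ T, α k :=
    Finset.sum_sdiff hST
  have hDnn : 0 ≤ ∑ k ∈ T \ S, α k :=
    Finset.sum_nonneg fun k hk => (hα k (Finset.sdiff_subset hk)).le
  have hCnn : 0 ≤ ∑ i ∈ S, c i := Finset.sum_nonneg hc
  have hbhalf : ∑ i ∈ S, b i / 2 = (∑ i ∈ S, b i) / 2 := by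
    rw [Finset.sum_div]
  have hC0 : ∑ i ∈ S, c i = 0 := by
    linarith [key, hsplit, hαsum, hbc, hDnn, hCnn, hsum, hbhalf]
  have hceq : ∀ i ∈ S, c i = 0 := fun i hi =>
    (Finset.sum_eq_zero_iff_of_nonneg hc).mp hC0 i hi
  have hD0 : ∑ k ∈ T \ S, α k = 0 := by linarith [key, hsplit, hαsum, hbc, hsum, hbhalf, hC0]
  have hTS : T = S := by
    have hempty : T \ S = ∅ := by
      by_contra hne
      obtain ⟨k, hk⟩ := Finset.nonempty_iff_ne_empty.mpr hne
      have hpos : 0 < α k := hα k (Finset.sdiff_subset hk)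
      have : α k ≤ ∑ j ∈ T \ S, α j :=
        Finset.single_le_sum (fun j hj => (hα j (Finset.sdiff_subset hj)).le) hk
      linarith
    exact Finset.Subset.antisymm (by rwa [← Finset.sdiff_eq_empty_iff_subset]) hST
  refine ⟨hceq, hTS, by linarith [key, hsplit, hαsum, hsum, hbhalf, hC0, hD0]⟩
end

section
/- If x ⊗ y acts as the identity on a tensor product of nonzero finite-dimensional vector spaces, then x and y each have a single eigenvalue, and if that eigenvalue is 1 then x = 1 and y = 1. -/
open Module

/-- Auxiliary: a pure tensor of nonzero vectors over a field is nonzero. -/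
lemma tmul_ne_zero_aux {k : Type*} [Field k]
    {V W : Type*} [AddCommGroup V] [Module k V] [AddCommGroup W] [Module k W]
    {u : V} {v : W} (hu : u ≠ 0) (hv : v ≠ 0) :
    (u ⊗ₜ[k] v : TensorProduct k V W) ≠ 0 := by
  obtain ⟨f, hf⟩ : ∃ f : Module.Dual k W, f v ≠ 0 := by
    by_contra hc
    push_neg at hc
    exact hv ((Module.forall_dual_apply_eq_zero_iff k v).mp hc)
  intro h0
  have : (TensorProduct.rid k V).toLinearMap.comp (LinearMap.lTensor V f) (u ⊗ₜ[k] v) = 0 := by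
    rw [h0]; simp
  simp only [LinearMap.comp_apply, LinearEquiv.coe_coe, LinearMap.lTensor_tmul, TensorProduct.rid_tmul] at this
  exact hu (by
    have := smul_eq_zero.mp this
    rcases this with h | h
    · exact absurd h hf
    · exact h)

/-- If `x ⊗ y` acts as the identity on a tensor product of nonzero
finite-dimensional vector spaces, then the product of any eigenvalue of `x`
with any eigenvalue of `y` is `1` (so each has a single eigenvalue), and if
that eigenvalue is `1` then `x = 1` and `y = 1`. -/
theorem tensor_id_eigenvalues {k : Type*} [Field k] [IsAlgClosed k]
    {V W : Type*} [AddCommGroup V] [Module k V] [AddCommGroup W] [Module k W]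
    [FiniteDimensional k V] [FiniteDimensional k W]
    [Nontrivial V] [Nontrivial W]
    (x : V →ₗ[k] V) (y : W →ₗ[k] W)
    (h : TensorProduct.map x y = LinearMap.id) :
    (∀ a b : k, Module.End.HasEigenvalue x a → Module.End.HasEigenvalue y b →
      a * b = 1) ∧
    ((∀ a : k, Module.End.HasEigenvalue x a → a = 1) →
     (∀ b : k, Module.End.HasEigenvalue y b → b = 1) →
      x = LinearMap.id ∧ y = LinearMap.id) := by
  have key : ∀ (u : V) (v : W), TensorProduct.map x y (u ⊗ₜ[k] v) = u ⊗ₜ[k] v := by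
    intro u v; rw [h]; rfl
  constructor
  · intro a b ha hb
    obtain ⟨u, hu⟩ := ha.exists_hasEigenvector
    obtain ⟨v, hv⟩ := hb.exists_hasEigenvector
    have hux := hu.apply_eq_smul
    have hvy := hv.apply_eq_smul
    have hu := hu.right
    have hv := hv.right
    have := key u v
    rw [TensorProduct.map_tmul, hux, hvy, TensorProduct.smul_tmul_smul] at this
    have h2 : (a * b - 1) • (u ⊗ₜ[k] v : TensorProduct k V W) = 0 := by
      rw [sub_smul, one_smul, this, sub_self]
    rcases smul_eq_zero.mp h2 with h3 | h3
    · exact sub_eq_zero.mp h3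
    · exact absurd h3 (tmul_ne_zero_aux hu hv)
  · intro hx hy
    obtain ⟨a, ha⟩ := Module.End.exists_eigenvalue x
    obtain ⟨b, hb⟩ := Module.End.exists_eigenvalue y
    obtain ⟨u, hu⟩ := ha.exists_hasEigenvector
    obtain ⟨v, hv⟩ := hb.exists_hasEigenvector
    have hux := hu.apply_eq_smul
    have hvy := hv.apply_eq_smul
    have hu := hu.right
    have hv := hv.right
    rw [hx a ha, one_smul] at hux
    rw [hy b hb, one_smul] at hvy
    constructor
    · ext w
      have := key w v
      rw [TensorProduct.map_tmul, hvy] at this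
      have h2 : (x w - w) ⊗ₜ[k] v = (0 : TensorProduct k V W) := by
        rw [TensorProduct.sub_tmul, this, sub_self]
      by_contra hne
      have hne' : x w - w ≠ 0 := sub_ne_zero.mpr (by simpa using hne)
      exact tmul_ne_zero_aux hne' hv h2
    · ext w
      have := key u w
      rw [TensorProduct.map_tmul, hux] at this
      have h2 : u ⊗ₜ[k] (y w - w) = (0 : TensorProduct k V W) := by
        rw [TensorProduct.tmul_sub, this, sub_self]
      by_contra hne
      have hne' : y w - w ≠ 0 := sub_ne_zero.mpr (by simpa using hne)
      exact tmul_ne_zero_aux hu hne' h2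
end

section
/- Let φ : A ⊗ B → A' ⊗ B' be an isomorphism of free ℤ-modules of the form φ = φ₁ ⊗ φ₂ where φ₁ : A ⊗ ℚ → A' ⊗ ℚ and φ₂ : B ⊗ ℚ → B' ⊗ ℚ are ℚ-linear isomorphisms. Then there exists λ ∈ ℚ* such that λ⁻¹φ₁ maps A isomorphically onto A' and λφ₂ maps B isomorphically onto B'. -/
open Matrix Kronecker

private lemma den_dvd_of_mul_int {r : ℚ} {q m : ℤ} (h : r * (q : ℚ) = (m : ℚ)) :
    (r.den : ℤ) ∣ q := by
  have h1 : (r.num : ℚ) * q = (m : ℚ) * r.den := by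
    rw [← Rat.num_div_den r] at h
    field_simp at h
    linarith [h]
  have h2 : r.num * q = m * (r.den : ℤ) := by exact_mod_cast h1
  have hco : IsCoprime (r.den : ℤ) r.num := by
    rw [Int.isCoprime_iff_gcd_eq_one, Int.gcd, Int.natAbs_natCast]
    exact Nat.Coprime.symm r.reduced
  have hdvd : (r.den : ℤ) ∣ r.num * q := ⟨m, by linarith [h2]⟩
  exact hco.dvd_of_dvd_mul_left hdvd

/-- Descending a tensor decomposition from `ℚ` to `ℤ` (stated in terms of
matrices with respect to bases of the free `ℤ`-modules): if a `ℤ`-isomorphism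
`M` of `A ⊗ B` (a unimodular integer matrix) factors over `ℚ` as a Kronecker
product `P ⊗ Q` of invertible rational matrices, then there is `λ ∈ ℚ*` such
that `λ⁻¹ P` and `λ Q` are unimodular integer matrices. -/
theorem tensor_decomposition_descends_to_Z (a b : ℕ) (ha : 0 < a) (hb : 0 < b)
    (M : Matrix (Fin a × Fin b) (Fin a × Fin b) ℤ) (hM : IsUnit M.det)
    (P : Matrix (Fin a) (Fin a) ℚ) (Q : Matrix (Fin b) (Fin b) ℚ)
    (hP : IsUnit P.det) (hQ : IsUnit Q.det)
    (hfac : M.map (Int.cast : ℤ → ℚ) = P ⊗ₖ Q) :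
    ∃ lam : ℚ, lam ≠ 0 ∧
      (∃ P' : Matrix (Fin a) (Fin a) ℤ, IsUnit P'.det ∧
        P'.map (Int.cast : ℤ → ℚ) = lam⁻¹ • P) ∧
      (∃ Q' : Matrix (Fin b) (Fin b) ℤ, IsUnit Q'.det ∧
        Q'.map (Int.cast : ℤ → ℚ) = lam • Q) := by
  haveI : NeZero a := ⟨ha.ne'⟩
  haveI : NeZero b := ⟨hb.ne'⟩
  -- entrywise factorization
  have hent : ∀ (i j : Fin a) (k l : Fin b),
      (M (i, k) (j, l) : ℚ) = P i j * Q k l := by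
    intro i j k l
    have := congrFun (congrFun hfac (i, k)) (j, l)
    simpa [Matrix.map_apply, Matrix.kroneckerMap_apply] using this
  -- Q has a nonzero entry
  have hQne : ∃ k l, Q k l ≠ 0 := by
    by_contra h
    push_neg at h
    have : Q = 0 := by ext k l; exact h k l
    rw [this, Matrix.det_zero] at hQ
    exact hQ.ne_zero rfl
  -- P has a nonzero entry
  have hPne : ∃ i j, P i j ≠ 0 := by
    by_contra h
    push_neg at h
    have : P = 0 := by ext i j; exact h i j
    rw [this, Matrix.det_zero] at hP
    exact hP.ne_zero rfl
  obtain ⟨i₀, j₀, hμ⟩ := hPne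
  set μ : ℚ := P i₀ j₀ with hμdef
  -- the integer matrix N with (N k l : ℚ) = μ * Q k l
  set N : Matrix (Fin b) (Fin b) ℤ := fun k l => M (i₀, k) (j₀, l) with hN
  have hNQ : ∀ k l, (N k l : ℚ) = μ * Q k l := fun k l => hent i₀ j₀ k l
  -- gcd of entries of N
  set g : ℤ := Finset.univ.gcd (fun p : Fin b × Fin b => N p.1 p.2) with hg
  have hgdvd : ∀ k l, g ∣ N k l := fun k l =>
    Finset.gcd_dvd (Finset.mem_univ (k, l))
  have hgne : g ≠ 0 := by
    intro h0
    obtain ⟨k, l, hkl⟩ := hQne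
    have := Finset.gcd_eq_zero_iff.mp h0 (k, l) (Finset.mem_univ _)
    simp only at this
    have : (N k l : ℚ) = 0 := by rw [this]; norm_num
    rw [hNQ k l] at this
    exact hkl ((mul_eq_zero.mp this).resolve_left hμ)
  have hgQ : (g : ℚ) ≠ 0 := Int.cast_ne_zero.mpr hgne
  set lam : ℚ := μ / (g : ℚ) with hlam
  have hlamne : lam ≠ 0 := div_ne_zero hμ hgQ
  -- Q' : integer matrix with cast = lam • Q
  set Q' : Matrix (Fin b) (Fin b) ℤ := fun k l => N k l / g with hQ'
  have hQ'cast : ∀ k l, (Q' k l : ℚ) = lam * Q k l := by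
    intro k l
    obtain ⟨c, hc⟩ := hgdvd k l
    have h1 : Q' k l = c := by rw [hQ']; simp only; rw [hc, Int.mul_ediv_cancel_left _ hgne]
    have h2 : (N k l : ℚ) = g * c := by exact_mod_cast congrArg (Int.cast : ℤ → ℚ) hc
    rw [h1, hlam]
    have := hNQ k l
    rw [h2] at this
    field_simp
    rw [mul_comm] at this ⊢
    nlinarith [this]
  -- gcd of entries of Q' is 1 (up to units): g * gcd Q' = g
  have hgcdQ' : Finset.univ.gcd (fun p : Fin b × Fin b => Q' p.1 p.2) = 1 := by
    have key : Finset.univ.gcd (fun p : Fin b × Fin b => N p.1 p.2)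
        = normalize g * Finset.univ.gcd (fun p : Fin b × Fin b => Q' p.1 p.2) := by
      rw [← Finset.gcd_mul_left]
      apply Finset.gcd_congr rfl
      intro p _
      obtain ⟨c, hc⟩ := hgdvd p.1 p.2
      rw [hQ']; simp only; rw [hc, Int.mul_ediv_cancel_left _ hgne]
    have hgnorm : normalize g = g := by rw [hg]; exact Finset.normalize_gcd
    rw [← hg, hgnorm] at key
    have key2 : g * Finset.univ.gcd (fun p : Fin b × Fin b => Q' p.1 p.2) = g * 1 := by
      rw [mul_one]; exact key.symm
    exact mul_left_cancel₀ hgne key2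
  -- P' entries: lam⁻¹ * P i j is an integer
  have hPint : ∀ i j, ((lam⁻¹ * P i j).den = 1) := by
    intro i j
    set r : ℚ := lam⁻¹ * P i j with hr
    have hdvd : ∀ k l, (r.den : ℤ) ∣ Q' k l := by
      intro k l
      apply den_dvd_of_mul_int (m := M (i, k) (j, l))
      rw [hQ'cast k l, hr]
      have : lam⁻¹ * P i j * (lam * Q k l) = P i j * Q k l := by
        field_simp
      rw [this, hent i j k l]
    have : (r.den : ℤ) ∣ Finset.univ.gcd (fun p : Fin b × Fin b => Q' p.1 p.2) :=
      Finset.dvd_gcd fun p _ => hdvd p.1 p.2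
    rw [hgcdQ'] at this
    have := Int.isUnit_iff.mp (isUnit_of_dvd_one this)
    omega
  set P' : Matrix (Fin a) (Fin a) ℤ := fun i j => (lam⁻¹ * P i j).num with hP'
  have hP'cast : ∀ i j, (P' i j : ℚ) = lam⁻¹ * P i j := by
    intro i j
    exact (Rat.den_eq_one_iff _).mp (hPint i j)
  -- the Kronecker product of P' and Q' equals M
  have hPQ'M : P' ⊗ₖ Q' = M := by
    have hinj : Function.Injective (Int.cast : ℤ → ℚ) := Int.cast_injective
    apply Matrix.map_injective hinj
    ext ⟨i, k⟩ ⟨j, l⟩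
    simp only [Matrix.map_apply, Matrix.kroneckerMap_apply]
    push_cast
    rw [hP'cast i j, hQ'cast k l, hent i j k l]
    field_simp
  -- determinants
  have hdet : P'.det ^ b * Q'.det ^ a = M.det := by
    have := Matrix.det_kronecker P' Q'
    rw [hPQ'M] at this
    simpa [Fintype.card_fin] using this.symm
  have hdetu : IsUnit (P'.det ^ b * Q'.det ^ a) := hdet ▸ hM
  have hP'u : IsUnit P'.det := by
    have : P'.det ∣ P'.det ^ b * Q'.det ^ a :=
      Dvd.dvd.mul_right (dvd_pow_self _ hb.ne') _
    exact isUnit_of_dvd_unit this hdetu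
  have hQ'u : IsUnit Q'.det := by
    have : Q'.det ∣ P'.det ^ b * Q'.det ^ a :=
      Dvd.dvd.mul_left (dvd_pow_self _ ha.ne') _
    exact isUnit_of_dvd_unit this hdetu
  refine ⟨lam, hlamne, ⟨P', hP'u, ?_⟩, ⟨Q', hQ'u, ?_⟩⟩
  · ext i j
    rw [Matrix.map_apply, hP'cast i j, Matrix.smul_apply, smul_eq_mul]
  · ext k l
    rw [Matrix.map_apply, hQ'cast k l, Matrix.smul_apply, smul_eq_mul]
end
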